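/- Let A be a 2-divisible abelian group, C an abelian group, and ψ : C × C → A an equalized 2-cocycle. If two characters χ₁ and χ₂ of (A × C, ⊞) lie in the same coadjoint orbit of B_ψ, then Stab(χ₁) = Stab(χ₂), and χ₁(x) = χ₂(x) for every x ∈ A × C that underlies an element of Stab(χ₁). -/

import Mathlib

/-- A 2-cocycle on `C` with values in `A` (trivial action of `C` on `A`). -/
def IsCocycle {A C : Type*} [AddCommGroup A] [AddCommGroup C] (ψ : C → C → A) : Prop :=
  ∀ c₁ c₂ c₃ : C, ψ c₁ c₂ + ψ (c₁ + c₂) c₃ = ψ c₁ (c₂ + c₃) + ψ c₂ c₃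

/-- A 2-cocycle `ψ` is equalized iff `ψ(c, -c) = 0` for all `c`. -/
def Equalized {A C : Type*} [AddCommGroup A] [AddCommGroup C] (ψ : C → C → A) : Prop :=
  ∀ c : C, ψ c (-c) = 0

/-- The skew-symmetrization `η(c₁,c₂) = ψ(c₁,c₂) - ψ(c₂,c₁)` of a 2-cocycle. -/
def eta {A C : Type*} [AddCommGroup A] [AddCommGroup C] (ψ : C → C → A)
    (c₁ c₂ : C) : A :=
  ψ c₁ c₂ - ψ c₂ c₁

/-- The addition `⊞` on `A × C` given by `φ(c₁,c₂) = (ψ(c₁,c₂)+ψ(c₂,c₁))/2`,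
where `half` is the halving map of the 2-divisible group `A`. -/
def boxAdd {A C : Type*} [AddCommGroup A] [AddCommGroup C] (half : A → A)
    (ψ : C → C → A) (x y : A × C) : A × C :=
  (x.1 + y.1 + half (ψ x.2 y.2 + ψ y.2 x.2), x.2 + y.2)

/-- A character of `(A × C, ⊞)`: a map `χ : A × C → ℂˣ` with `χ(x ⊞ y) = χ(x)·χ(y)`. -/
def IsChar {A C : Type*} [AddCommGroup A] [AddCommGroup C] (half : A → A)
    (ψ : C → C → A) (χ : A × C → ℂˣ) : Prop :=
  ∀ x y : A × C, χ (boxAdd half ψ x y) = χ x * χ y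

/-- The coadjoint action of `b ∈ B_ψ` on characters: `(b • χ)(a,c) = χ(a - η(c_b,c), c)`. -/
def coact {A C : Type*} [AddCommGroup A] [AddCommGroup C] (ψ : C → C → A)
    (b : A × C) (χ : A × C → ℂˣ) : A × C → ℂˣ :=
  fun x => χ (x.1 - eta ψ b.2 x.2, x.2)

/-!
An equalized cocycle is normalized, so `(a, 0) ⊞ (a', c) = (a + a', c)`: a character `χ`
restricts to a character of `A` on `A × {0}`, and `(b • χ)(x) = χ(η(x.2, b.2), 0) · χ(x)`.
Hence `Stab(χ)` is cut out by the values of `χ` on `A × {0}`, which the coadjoint action does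
not change. For `x ∈ Stab(χ₁)` the factor `χ₁(η(x.2, g.2), 0)` relating `g • χ₁` to `χ₁` at `x`
is `χ₁(η(g.2, x.2), 0)⁻¹ = 1`, by skew-symmetry of `η`.
-/

section

variable {A C : Type*} [AddCommGroup A] [AddCommGroup C] {ψ : C → C → A}

theorem Equalized.apply_zero_zero (heq : Equalized ψ) : ψ 0 0 = 0 := by
  simpa using heq 0

theorem IsCocycle.apply_zero_left (hψ : IsCocycle ψ) (heq : Equalized ψ) (c : C) :
    ψ 0 c = 0 := by
  have h := hψ 0 0 c
  rw [add_zero, zero_add, heq.apply_zero_zero, zero_add] at h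
  exact add_eq_left.mp h.symm

theorem IsCocycle.apply_zero_right (hψ : IsCocycle ψ) (heq : Equalized ψ) (c : C) :
    ψ c 0 = 0 := by
  have h := hψ c 0 0
  rw [add_zero, add_zero, heq.apply_zero_zero] at h
  exact add_left_cancel h

theorem eta_swap (c d : C) : eta ψ c d = -eta ψ d c :=
  (neg_sub _ _).symm

theorem IsCocycle.eta_zero_right (hψ : IsCocycle ψ) (heq : Equalized ψ) (c : C) :
    eta ψ c 0 = 0 := by
  rw [eta, hψ.apply_zero_left heq, hψ.apply_zero_right heq, sub_zero]

theorem half_zero_of_injective {half : A → A} (hinj : Function.Injective (fun a : A => a + a))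
    (hhalf : ∀ a : A, half a + half a = a) : half 0 = 0 :=
  hinj (by simp only [hhalf, add_zero])

variable {half : A → A} {χ : A × C → ℂˣ}

theorem IsChar.map_add_fst (hχ : IsChar half ψ χ) (hψ : IsCocycle ψ) (heq : Equalized ψ)
    (hhalf₀ : half 0 = 0) (a a' : A) (c : C) : χ (a + a', c) = χ (a, 0) * χ (a', c) := by
  simpa only [boxAdd, hψ.apply_zero_left heq, hψ.apply_zero_right heq, add_zero, zero_add,
    hhalf₀] using hχ (a, 0) (a', c)

theorem IsChar.map_zero (hχ : IsChar half ψ χ) (hψ : IsCocycle ψ) (heq : Equalized ψ)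
    (hhalf₀ : half 0 = 0) : χ (0, 0) = 1 := by
  have h := hχ.map_add_fst hψ heq hhalf₀ 0 0 0
  rw [add_zero] at h
  exact right_eq_mul.mp h

theorem IsChar.map_neg_fst (hχ : IsChar half ψ χ) (hψ : IsCocycle ψ) (heq : Equalized ψ)
    (hhalf₀ : half 0 = 0) (a : A) : χ (-a, 0) = (χ (a, 0))⁻¹ := by
  have h := hχ.map_add_fst hψ heq hhalf₀ a (-a) 0
  rw [add_neg_cancel, hχ.map_zero hψ heq hhalf₀] at h
  exact eq_inv_of_mul_eq_one_right h.symm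

theorem IsChar.coact_apply (hχ : IsChar half ψ χ) (hψ : IsCocycle ψ) (heq : Equalized ψ)
    (hhalf₀ : half 0 = 0) (b x : A × C) :
    coact ψ b χ x = χ (eta ψ x.2 b.2, 0) * χ x := by
  rw [coact, sub_eq_add_neg, add_comm, ← eta_swap, hχ.map_add_fst hψ heq hhalf₀]

theorem IsChar.coact_eq_self_iff (hχ : IsChar half ψ χ) (hψ : IsCocycle ψ) (heq : Equalized ψ)
    (hhalf₀ : half 0 = 0) (b : A × C) :
    coact ψ b χ = χ ↔ ∀ c : C, χ (eta ψ c b.2, 0) = 1 := by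
  simp only [funext_iff, hχ.coact_apply hψ heq hhalf₀, mul_eq_right, Prod.forall]
  exact ⟨fun h c => h 0 c, fun h _ c => h c⟩

theorem IsCocycle.coact_apply_snd_zero (hψ : IsCocycle ψ) (heq : Equalized ψ) (b : A × C)
    (a : A) : coact ψ b χ (a, 0) = χ (a, 0) := by
  rw [coact, hψ.eta_zero_right heq, sub_zero]

end

/-- **Stabilizer lemma.** Let `A` be 2-divisible (with halving map `half`),
`C` abelian, `ψ` an equalized 2-cocycle. If two characters `χ₁, χ₂` of `(A × C, ⊞)` lie in
the same coadjoint orbit of `B_ψ`, then `Stab(χ₁) = Stab(χ₂)`, and `χ₁(x) = χ₂(x)` for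
every `x` underlying an element of `Stab(χ₁)`. -/
theorem stabilizer_lemma {A C : Type*} [AddCommGroup A] [AddCommGroup C]
    (half : A → A) (hbij : Function.Bijective (fun a : A => a + a))
    (hhalf : ∀ a : A, half a + half a = a)
    (ψ : C → C → A) (hψ : IsCocycle ψ) (heq : Equalized ψ)
    (χ₁ χ₂ : A × C → ℂˣ) (h₁ : IsChar half ψ χ₁) (h₂ : IsChar half ψ χ₂)
    (horb : ∃ g : A × C, χ₂ = coact ψ g χ₁) :
    {b : A × C | coact ψ b χ₁ = χ₁} = {b : A × C | coact ψ b χ₂ = χ₂} ∧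
    ∀ x : A × C, coact ψ x χ₁ = χ₁ → χ₁ x = χ₂ x := by
  obtain ⟨g, rfl⟩ := horb
  have hhalf₀ := half_zero_of_injective hbij.1 hhalf
  refine ⟨Set.ext fun b => ?_, fun x hx => ?_⟩
  · simp only [Set.mem_ofPred_eq, h₁.coact_eq_self_iff hψ heq hhalf₀,
      h₂.coact_eq_self_iff hψ heq hhalf₀, hψ.coact_apply_snd_zero heq]
  · have hfactor : χ₁ (eta ψ x.2 g.2, 0) = 1 := by
      rw [eta_swap, h₁.map_neg_fst hψ heq hhalf₀,
        (h₁.coact_eq_self_iff hψ heq hhalf₀ x).mp hx, inv_one]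
    rw [h₁.coact_apply hψ heq hhalf₀, hfactor, one_mul]
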